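/- Let d ≥ 4 and let ω = exp(2πi/((d-1)(d-2))). Define the d × d matrix U with eigendecomposition U = |v_1⟩⟨v_1| - |v_2⟩⟨v_2| + Σ_{j=1}^{d-2} e^{2πij/(d-2)} |v_{j+2}⟩⟨v_{j+2}|, where v_1 = (1/√2, 1/√(2d-2), ..., 1/√(2d-2)), v_2 = (1/√2, -1/√(2d-2), ..., -1/√(2d-2)), and for 1 ≤ j ≤ d-2, v_{j+2} = (1/√(d-1))·(0, ω_{d-1}^0, ω_{d-1}^j, ω_{d-1}^{2j}, ..., ω_{d-1}^{j(d-2)}) with ω_{d-1} = exp(2πi/(d-1)). Then U is unitary and all diagonal entries of U are zero. -/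

import Mathlib

/-! Apart from the head coordinate, `v₀` and `v₁` are `±1/√2` times the constant Fourier vector
of length `d - 1`, and `v_t` (`t ≥ 2`) is the Fourier vector of frequency `t - 1`; orthogonality of
the characters of `ℤ/(d-1)` makes the `v_t` orthonormal, so `U = V diag(λ) Vᴴ` is a product of
unitaries. On the diagonal `U_aa = Σ_t λ_t |v_t(a)|²`: the contributions of `v₀` and `v₁` cancel
(equal weights, eigenvalues `±1`), `v_t` for `t ≥ 2` vanishes at `a = 0` and has weight
`1/(d-1)` elsewhere, which leaves a multiple of the full sum `Σ_{j=1}^{d-2} e^{2πij/(d-2)}` of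
`(d-2)`-th roots of unity, zero because `d - 2 ≥ 2`. -/

/-- `uroot n = exp(2πi/n)`, a primitive `n`-th root of unity. -/
noncomputable def uroot (n : ℕ) : ℂ := Complex.exp (2 * Real.pi * Complex.I / n)

/-- The eigenvectors `v₁, …, v_d` (0-indexed) described in the paper:
`v 0 = (1/√2, 1/√(2d-2), …)`, `v 1 = (1/√2, -1/√(2d-2), …)`, and for `t ≥ 2`,
`v t = (1/√(d-1)) (0, 1, ω^{j}, ω^{2j}, …, ω^{j(d-2)})` with `j = t - 1` and
`ω = exp(2πi/(d-1))`. -/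
noncomputable def evec (d : ℕ) (t : Fin d) : Fin d → ℂ :=
  if t.val = 0 then
    fun a => if a.val = 0 then (Real.sqrt 2 : ℂ)⁻¹
             else ((Real.sqrt (2 * (d : ℝ) - 2) : ℝ) : ℂ)⁻¹
  else if t.val = 1 then
    fun a => if a.val = 0 then (Real.sqrt 2 : ℂ)⁻¹
             else -((Real.sqrt (2 * (d : ℝ) - 2) : ℝ) : ℂ)⁻¹
  else
    fun a => if a.val = 0 then 0
             else ((Real.sqrt ((d : ℝ) - 1) : ℝ) : ℂ)⁻¹ *
                    uroot (d - 1) ^ ((t.val - 1) * (a.val - 1))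

/-- The eigenvalues: `λ 0 = 1`, `λ 1 = -1`, and `λ t = exp(2πi(t-1)/(d-2))` for `t ≥ 2`. -/
noncomputable def eval' (d : ℕ) (t : Fin d) : ℂ :=
  if t.val = 0 then 1 else if t.val = 1 then -1 else uroot (d - 2) ^ (t.val - 1)

/-- The matrix `U = Σ_t λ_t |v_t⟩⟨v_t|`. -/
noncomputable def Umat (d : ℕ) : Matrix (Fin d) (Fin d) ℂ :=
  fun a b => ∑ t, eval' d t * evec d t a * (starRingEnd ℂ) (evec d t b)

open ComplexConjugate Matrix

lemma norm_uroot (n : ℕ) : ‖uroot n‖ = 1 := by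
  simp [uroot, Complex.norm_exp]

lemma isPrimitiveRoot_uroot {n : ℕ} (hn : n ≠ 0) : IsPrimitiveRoot (uroot n) n :=
  Complex.isPrimitiveRoot_exp n hn

lemma IsPrimitiveRoot.sum_conj_pow_mul_pow {ζ : ℂ} {n : ℕ} (hζ : IsPrimitiveRoot ζ n)
    {i j : ℕ} (hi : i < n) (hj : j < n) :
    ∑ k : Fin n, conj (ζ ^ (i * k)) * ζ ^ (j * k) = if i = j then (n : ℂ) else 0 := by
  have hζ0 : ζ ≠ 0 := hζ.ne_zero (by omega)
  have hconj : conj ζ = ζ⁻¹ := (Complex.inv_eq_conj (hζ.norm'_eq_one (by omega))).symm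
  set r := ζ ^ j * (ζ ^ i)⁻¹
  have hterm (k : ℕ) : conj (ζ ^ (i * k)) * ζ ^ (j * k) = r ^ k := by
    simp only [r, map_pow, hconj, mul_pow, inv_pow, ← pow_mul]
    ring
  simp only [hterm, Fin.sum_univ_eq_sum_range (r ^ ·)]
  split_ifs with hij
  · simp [r, hij, hζ0]
  · have hr : r ≠ 1 := fun h => hij <| (hζ.pow_inj hj hi (by
      simpa [r, mul_inv_eq_one₀ (pow_ne_zero _ hζ0)] using h)).symm
    have hrn : r ^ n = 1 := by
      rw [mul_pow, inv_pow, ← pow_mul', ← pow_mul', pow_mul, pow_mul, hζ.pow_eq_one, one_pow,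
        one_pow, inv_one, mul_one]
    rw [geom_sum_eq hr, hrn, sub_self, zero_div]

noncomputable def fourierVec (n j : ℕ) (k : Fin n) : ℂ :=
  ((Real.sqrt n : ℝ) : ℂ)⁻¹ * uroot n ^ (j * k)

lemma conj_sqrt_inv_mul_sqrt_inv (n : ℕ) :
    conj ((Real.sqrt n : ℝ) : ℂ)⁻¹ * ((Real.sqrt n : ℝ) : ℂ)⁻¹ = (n : ℂ)⁻¹ := by
  rw [map_inv₀, Complex.conj_ofReal, ← mul_inv, ← Complex.ofReal_mul,
    Real.mul_self_sqrt n.cast_nonneg, Complex.ofReal_natCast]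

lemma sum_conj_fourierVec_mul {n i j : ℕ} (hi : i < n) (hj : j < n) :
    ∑ k, conj (fourierVec n i k) * fourierVec n j k = if i = j then 1 else 0 := by
  have hn : n ≠ 0 := by omega
  simp only [fourierVec, map_mul, mul_mul_mul_comm _ (conj _), ← Finset.mul_sum]
  rw [conj_sqrt_inv_mul_sqrt_inv n, (isPrimitiveRoot_uroot hn).sum_conj_pow_mul_pow hi hj]
  split_ifs <;> simp [hn]

lemma fourierVec_mul_conj (n j : ℕ) (k : Fin n) :
    fourierVec n j k * conj (fourierVec n j k) = (n : ℂ)⁻¹ := by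
  rw [mul_comm, fourierVec, map_mul, mul_mul_mul_comm, conj_sqrt_inv_mul_sqrt_inv n,
    Complex.conj_mul', norm_pow, norm_uroot]
  simp

/-- `evec (n + 1) t` is `(evecHead t, evecScale t • fourierVec n (t - 1))`; the truncated
`t - 1` makes both `t = 0` and `t = 1` use the constant vector `fourierVec n 0`. -/
noncomputable def evecHead {d : ℕ} (t : Fin d) : ℝ :=
  if t.val ≤ 1 then (Real.sqrt 2)⁻¹ else 0

noncomputable def evecScale {d : ℕ} (t : Fin d) : ℝ :=
  if t.val = 0 then (Real.sqrt 2)⁻¹ else if t.val = 1 then -(Real.sqrt 2)⁻¹ else 1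

lemma evec_apply_zero (n : ℕ) (t : Fin (n + 1)) : evec (n + 1) t 0 = evecHead t := by
  unfold evec evecHead
  split_ifs <;> first | omega | simp

lemma evec_apply_succ (n : ℕ) (t : Fin (n + 1)) (k : Fin n) :
    evec (n + 1) t k.succ = evecScale t * fourierVec n (t.val - 1) k := by
  have hsqrt : Real.sqrt (2 * ((n + 1 : ℕ) : ℝ) - 2) = Real.sqrt 2 * Real.sqrt n := by
    rw [← Real.sqrt_mul zero_le_two]; push_cast; ring_nf
  have hsqrt' : Real.sqrt (((n + 1 : ℕ) : ℝ) - 1) = Real.sqrt n := by push_cast; ring_nf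
  simp only [evec, evecScale, fourierVec, hsqrt, hsqrt']
  split_ifs <;> simp [*, mul_comm]

lemma evecHead_mul_add_evecScale_mul {d : ℕ} (s t : Fin d) :
    evecHead s * evecHead t + (if s.val - 1 = t.val - 1 then evecScale s * evecScale t else 0)
      = if s = t then 1 else 0 := by
  have hhalf : (Real.sqrt 2)⁻¹ * (Real.sqrt 2)⁻¹ = 2⁻¹ := by
    rw [← mul_inv, Real.mul_self_sqrt zero_le_two]
  simp only [evecHead, evecScale, Fin.ext_iff]
  split_ifs <;> first | omega | norm_num [hhalf]

lemma sum_conj_evec_mul {n : ℕ} (hn : n ≠ 0) (s t : Fin (n + 1)) :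
    ∑ a, conj (evec (n + 1) s a) * evec (n + 1) t a = if s = t then 1 else 0 := by
  rw [Fin.sum_univ_succ]
  simp only [evec_apply_zero, evec_apply_succ, map_mul, Complex.conj_ofReal,
    mul_mul_mul_comm (evecScale s : ℂ), ← Finset.mul_sum,
    sum_conj_fourierVec_mul (by omega : s.val - 1 < n) (by omega : t.val - 1 < n), mul_ite,
    mul_one, mul_zero]
  have h := evecHead_mul_add_evecScale_mul s t
  split_ifs at h ⊢ <;> exact_mod_cast h

lemma Matrix.diagonal_mem_unitaryGroup {n α : Type*} [Fintype n] [DecidableEq n] [CommRing α]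
    [StarRing α] {v : n → α} (hv : ∀ i, star (v i) * v i = 1) :
    diagonal v ∈ unitaryGroup n α := by
  rw [mem_unitaryGroup_iff', star_eq_conjTranspose, diagonal_conjTranspose,
    diagonal_mul_diagonal]
  simp only [Pi.star_apply, hv, diagonal_one]

noncomputable def evecMatrix (d : ℕ) : Matrix (Fin d) (Fin d) ℂ :=
  Matrix.of fun a t => evec d t a

lemma evecMatrix_mem_unitaryGroup {d : ℕ} (hd : 2 ≤ d) :
    evecMatrix d ∈ unitaryGroup (Fin d) ℂ := by
  obtain ⟨n, rfl⟩ : ∃ n, d = n + 1 := ⟨d - 1, by omega⟩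
  rw [mem_unitaryGroup_iff']
  ext s t
  simpa [evecMatrix, mul_apply, one_apply] using sum_conj_evec_mul (by omega) s t

lemma star_eval'_mul_self (d : ℕ) (t : Fin d) : star (eval' d t) * eval' d t = 1 := by
  unfold eval'
  split_ifs
  · simp
  · simp
  · rw [Complex.star_def, Complex.conj_mul', norm_pow, norm_uroot]
    simp

lemma Umat_eq_evecMatrix_mul_diagonal_mul (d : ℕ) :
    Umat d = evecMatrix d * diagonal (eval' d) * (evecMatrix d)ᴴ := by
  ext a b
  rw [mul_apply]
  simp only [Umat, evecMatrix, mul_diagonal, conjTranspose_apply, of_apply]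
  exact Finset.sum_congr rfl fun t _ => by rw [Complex.star_def]; ring

lemma Umat_mem_unitaryGroup {d : ℕ} (hd : 2 ≤ d) : Umat d ∈ unitaryGroup (Fin d) ℂ := by
  have hV := evecMatrix_mem_unitaryGroup hd
  rw [Umat_eq_evecMatrix_mul_diagonal_mul, ← star_eq_conjTranspose]
  exact mul_mem (mul_mem hV (diagonal_mem_unitaryGroup (star_eval'_mul_self d)))
    (Unitary.star_mem hV)

lemma sum_uroot_pow_succ {m : ℕ} (hm : 2 ≤ m) : ∑ i : Fin m, uroot m ^ (i.val + 1) = 0 := by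
  have hζ : IsPrimitiveRoot (uroot m) m := isPrimitiveRoot_uroot (by omega)
  simp only [pow_succ, ← Finset.sum_mul, Fin.sum_univ_eq_sum_range (uroot m ^ ·),
    hζ.geom_sum_eq_zero (by omega), zero_mul]

lemma evec_succ_mul_conj (n : ℕ) (t : Fin (n + 1)) (k : Fin n) :
    evec (n + 1) t k.succ * conj (evec (n + 1) t k.succ)
      = (evecScale t : ℂ) ^ 2 * (n : ℂ)⁻¹ := by
  rw [evec_apply_succ, map_mul, Complex.conj_ofReal, mul_mul_mul_comm, fourierVec_mul_conj, sq]

lemma Umat_apply_self {d : ℕ} (hd : 4 ≤ d) (a : Fin d) : Umat d a a = 0 := by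
  obtain ⟨m, rfl⟩ : ∃ m, d = m + 1 + 1 := ⟨d - 2, by omega⟩
  simp only [Umat, Fin.sum_univ_succ (n := m + 1), Fin.sum_univ_succ (n := m), mul_assoc]
  cases a using Fin.cases with
  | zero =>
    simp [evec_apply_zero, evecHead, eval']
  | succ k =>
    simp [evec_succ_mul_conj, evecScale, eval', ← Finset.sum_mul,
      sum_uroot_pow_succ (m := m) (by omega)]

theorem stmt4 (d : ℕ) (hd : 4 ≤ d) :
    Umat d ∈ Matrix.unitaryGroup (Fin d) ℂ ∧ ∀ a : Fin d, Umat d a a = 0 :=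
  ⟨Umat_mem_unitaryGroup (by omega), Umat_apply_self hd⟩
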